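/- arXiv:1910.01118 — 3 statements merged into one kernel-verified Lean document; each statement's English description precedes it below -/
import Mathlib

section
/- For real numbers a, c, E, K with E > 0, K > 0 and a + K > 0, sup_{(v₁,v₂)∈ℝ²} [ v₁ a + v₂ c − (E/2)(v₁ + v₂²/2)² − (K/2) v₂² ] = c²/(2(a+K)) + a²/(2E). -/
theorem pointwise_conjugate_GK
    (E K a c : ℝ) (hE : 0 < E) (hK : 0 < K) (haK : 0 < a + K) :
    IsLUB {y : ℝ | ∃ v₁ v₂ : ℝ,
        y = v₁ * a + v₂ * c - (E / 2) * (v₁ + v₂ ^ 2 / 2) ^ 2 - (K / 2) * v₂ ^ 2}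
      (c ^ 2 / (2 * (a + K)) + a ^ 2 / (2 * E)) := by
  apply IsGreatest.isLUB
  constructor
  · refine ⟨a / E - (c / (a + K)) ^ 2 / 2, c / (a + K), ?_⟩
    field_simp
    ring
  · rintro y ⟨v₁, v₂, rfl⟩
    have h1 : 0 ≤ (E / 2) * (v₁ + v₂ ^ 2 / 2 - a / E) ^ 2 := by positivity
    have h2 : 0 ≤ ((a + K) / 2) * (v₂ - c / (a + K)) ^ 2 := by positivity
    have hE' : E ≠ 0 := hE.ne'
    have haK' : a + K ≠ 0 := haK.ne'
    have key : c ^ 2 / (2 * (a + K)) + a ^ 2 / (2 * E)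
        - (v₁ * a + v₂ * c - (E / 2) * (v₁ + v₂ ^ 2 / 2) ^ 2 - (K / 2) * v₂ ^ 2)
        = (E / 2) * (v₁ + v₂ ^ 2 / 2 - a / E) ^ 2
          + ((a + K) / 2) * (v₂ - c / (a + K)) ^ 2 := by
      field_simp
      ring
    linarith
end

section
/- Let E > 0, K = E/2, and t ∈ ℝ with |t| < 1/4. Define ẑ* = Kt, v̂₂* = E(t + t²/2) − ẑ*, v̂₁* = (ẑ* + v̂₂* + K)t, and set s = v̂₂* + ẑ* + K. Then the pointwise dual energy density (1/(2K))(ẑ*)² − (1/2)(v̂₁*)²/s − (1/(2E))(v̂₂* + ẑ*)² + t(v̂₁* + v̂₂*) equals the primal energy density (E/2)(t + t²/2)². -/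
theorem zero_duality_gap_density
    (E K t z v₂ v₁ s : ℝ) (hE : 0 < E) (hK : K = E / 2) (ht : |t| < 1 / 4)
    (hz : z = K * t)
    (hv₂ : v₂ = E * (t + t ^ 2 / 2) - z)
    (hv₁ : v₁ = (z + v₂ + K) * t)
    (hs : s = v₂ + z + K) :
    (1 / (2 * K)) * z ^ 2 - (1 / 2) * v₁ ^ 2 / s - (1 / (2 * E)) * (v₂ + z) ^ 2
        + t * (v₁ + v₂)
      = (E / 2) * (t + t ^ 2 / 2) ^ 2 := by
  have hsv : s = (E / 2) * (1 + t) ^ 2 := by subst hK hz hv₂ hs; ring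
  have h1t : (1 : ℝ) + t ≠ 0 := by
    rcases abs_lt.1 ht with ⟨h, _⟩; nlinarith
  have hs0 : s ≠ 0 := by
    rw [hsv]; positivity
  have hv₁s : v₁ = s * t := by rw [hv₁, hs]; ring
  rw [hv₁s]
  have : (1 / 2) * (s * t) ^ 2 / s = (1 / 2) * s * t ^ 2 := by
    field_simp
  rw [this]
  subst hK hz hv₂ hs
  field_simp
  ring
end

section
/- Let E > 0, K = E/2, and for t ∈ ℝ with |t| < 1/4 define ẑ* = Kt, v̂₂* = E(t + t²/2) − ẑ*, v̂₁* = (ẑ* + v̂₂* + K)t, s = ẑ* + v̂₂* + K. Then the second derivative of the map z ↦ z²/(2K) − (1/2)(v̂₁*)²/(v̂₂* + z + K) − (v̂₂* + z)²/(2E) (the dual functional density in z*) at z = ẑ* equals 2/E − (v̂₁*)²/s³ − 1/E = 1/E − t²/s, which is strictly greater than 5/(7E). -/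
/-!
With `s = v̂₂* + ẑ* + E/2` the constraints give `s = (E/2)(1 + t)²` and `v̂₁* = s t`, so the second
derivative `1/K - v̂₁*²/s³ - 1/E` collapses to `1/E - t²/s = 1/E - 2t²/(E(1 + t)²)`, and the bound
amounts to `7t² < (1 + t)²`, which holds for `|t| < 1/4`.
-/

/-- The integrand of `J*(v̂*, z*)` as a function of `z*`, with `v̂* = (v₁, v₂)` and `K = EA/2`. -/
noncomputable def dualDensity (K E v₁ v₂ w : ℝ) : ℝ :=
  w ^ 2 / (2 * K) - (1 / 2) * v₁ ^ 2 / (v₂ + w + K) - (v₂ + w) ^ 2 / (2 * E)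

section
variable (K E v₁ v₂ : ℝ) {x : ℝ}

theorem hasDerivAt_dualDensity (hx : v₂ + x + K ≠ 0) :
    HasDerivAt (dualDensity K E v₁ v₂)
      (x / K + (1 / 2) * v₁ ^ 2 / (v₂ + x + K) ^ 2 - (v₂ + x) / E) x := by
  have hshift : HasDerivAt (fun w : ℝ => v₂ + w) 1 x := (hasDerivAt_id x).const_add v₂
  have hsq := ((hasDerivAt_pow 2 x).div_const (2 * K)).sub
    (((hshift.add_const K).inv hx).const_mul ((1 / 2) * v₁ ^ 2))
  refine (hsq.sub ((hshift.pow 2).div_const (2 * E))).congr_deriv ?_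
  field_simp
  ring

theorem hasDerivAt_deriv_dualDensity (hx : v₂ + x + K ≠ 0) :
    HasDerivAt (fun w => w / K + (1 / 2) * v₁ ^ 2 / (v₂ + w + K) ^ 2 - (v₂ + w) / E)
      (1 / K - v₁ ^ 2 / (v₂ + x + K) ^ 3 - 1 / E) x := by
  have hshift : HasDerivAt (fun w : ℝ => v₂ + w) 1 x := (hasDerivAt_id x).const_add v₂
  have h := (((hasDerivAt_id x).div_const K).add
    ((((hshift.add_const K).pow 2).inv (pow_ne_zero 2 hx)).const_mul ((1 / 2) * v₁ ^ 2))).sub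
    (hshift.div_const E)
  refine h.congr_deriv ?_
  simp only [Pi.pow_apply]
  field_simp
  ring

theorem deriv_deriv_dualDensity (hx : v₂ + x + K ≠ 0) :
    deriv (deriv (dualDensity K E v₁ v₂)) x = 1 / K - v₁ ^ 2 / (v₂ + x + K) ^ 3 - 1 / E := by
  have hderiv : deriv (dualDensity K E v₁ v₂) =ᶠ[nhds x]
      fun w => w / K + (1 / 2) * v₁ ^ 2 / (v₂ + w + K) ^ 2 - (v₂ + w) / E := by
    have hcont : Continuous fun w : ℝ => v₂ + w + K := by fun_prop
    filter_upwards [hcont.continuousAt.eventually_ne hx] with w hw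
    exact (hasDerivAt_dualDensity K E v₁ v₂ hw).deriv
  rw [hderiv.deriv_eq, (hasDerivAt_deriv_dualDensity K E v₁ v₂ hx).deriv]

end

theorem seven_mul_sq_lt_one_add_sq {t : ℝ} (ht : |t| < 1 / 4) : 7 * t ^ 2 < (1 + t) ^ 2 := by
  obtain ⟨hlo, hhi⟩ := abs_lt.mp ht
  nlinarith

theorem lt_inv_sub_sq_div {E t : ℝ} (hE : 0 < E) (ht : |t| < 1 / 4) :
    5 / (7 * E) < 1 / E - t ^ 2 / (E / 2 * (1 + t) ^ 2) := by
  have ht_pos : 0 < 1 + t := by linarith [neg_abs_le t]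
  have key : t ^ 2 / (E / 2 * (1 + t) ^ 2) < 2 / (7 * E) := by
    rw [div_lt_div_iff₀ (by positivity) (by positivity)]
    nlinarith [seven_mul_sq_lt_one_add_sq ht]
  have : 1 / E = 5 / (7 * E) + 2 / (7 * E) := by field_simp; norm_num
  linarith

theorem dual_second_derivative_computation_general
    (E K t z v₂ v₁ s : ℝ) (hE : 0 < E) (hK : K = E / 2) (ht : |t| < 1 / 4)
    (hv₂ : v₂ = E * (t + t ^ 2 / 2) - z)
    (hv₁ : v₁ = (z + v₂ + K) * t)
    (hs : s = z + v₂ + K) :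
    deriv (deriv (fun w : ℝ =>
        w ^ 2 / (2 * K) - (1 / 2) * v₁ ^ 2 / (v₂ + w + K) - (v₂ + w) ^ 2 / (2 * E))) z
      = 2 / E - v₁ ^ 2 / s ^ 3 - 1 / E ∧
    2 / E - v₁ ^ 2 / s ^ 3 - 1 / E = 1 / E - t ^ 2 / s ∧
    1 / E - t ^ 2 / s > 5 / (7 * E) := by
  have hs_sq : s = E / 2 * (1 + t) ^ 2 := by rw [hs, hv₂, hK]; ring
  have hs_pos : 0 < s := by
    have ht_pos : 0 < 1 + t := by linarith [neg_abs_le t]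
    rw [hs_sq]
    positivity
  have hv₁_eq : v₁ = s * t := by rw [hv₁, hs]
  have hs_eq : v₂ + z + K = s := by rw [hs]; ring
  refine ⟨(deriv_deriv_dualDensity K E v₁ v₂ (hs_eq ▸ hs_pos.ne')).trans ?_, ?_, ?_⟩
  · rw [hs_eq, hK]
    ring
  · rw [hv₁_eq]
    field_simp
    ring
  · rw [hs_sq]
    exact lt_inv_sub_sq_div hE ht

theorem dual_second_derivative_computation
    (E K t z v₂ v₁ s : ℝ) (hE : 0 < E) (hK : K = E / 2) (ht : |t| < 1 / 4)
    (hz : z = K * t)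
    (hv₂ : v₂ = E * (t + t ^ 2 / 2) - z)
    (hv₁ : v₁ = (z + v₂ + K) * t)
    (hs : s = z + v₂ + K) :
    deriv (deriv (fun w : ℝ =>
        w ^ 2 / (2 * K) - (1 / 2) * v₁ ^ 2 / (v₂ + w + K) - (v₂ + w) ^ 2 / (2 * E))) z
      = 2 / E - v₁ ^ 2 / s ^ 3 - 1 / E ∧
    2 / E - v₁ ^ 2 / s ^ 3 - 1 / E = 1 / E - t ^ 2 / s ∧
    1 / E - t ^ 2 / s > 5 / (7 * E) :=
  dual_second_derivative_computation_general E K t z v₂ v₁ s hE hK ht hv₂ hv₁ hs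
end
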